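/- arXiv:math/0003020 — 3 statements merged into one kernel-verified Lean document; each statement's English description precedes it below -/
import Mathlib

section
/- Let X and Y be real Banach spaces, k ≥ 1 an integer and P : X → Y a continuous k-homogeneous polynomial. The following are equivalent: (B) every sequence (xₙ) in X equivalent to the c₀-basis has a subsequence (x_{n_i}) such that (P(x_{n_i})) is a sequence in Y equivalent to the c₀-basis; (E) for every sequence (xₙ) in X equivalent to the c₀-basis, the sequence ‖P(xₙ)‖ does not converge to 0. -/
/-!
(B) ⇒ (E) holds because a sequence equivalent to the `c₀`-basis is bounded below in norm.

(E) ⇒ (B): by (E) some subsequence of `(xₙ)` has `‖P xₙ‖ ≥ ε > 0`. Averaging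
`A(∑ ε¹ᵢxᵢ, …, ∑ εᵏ⁻¹ᵢxᵢ, ∑ σᵢε¹ᵢ⋯εᵏ⁻¹ᵢxᵢ)` over independent random signs `εˡ` leaves only the
diagonal `∑ σᵢ A(xᵢ, …, xᵢ)`; with `σᵢ = sign φ (P xᵢ)` this gives `∑ |φ (P xₙ)| ≤ ‖φ‖ ‖A‖ Cᵏ`
for every functional `φ`, so `(P xₙ)` is weakly unconditionally Cauchy, hence weakly null, and
has an upper `c₀`-estimate. A weakly null sequence bounded below has, by Mazur's lemma, a basic
subsequence with basis constant `2`, and a basic sequence bounded below satisfies a lower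
`c₀`-estimate.
-/

open Filter Topology Metric

noncomputable section

/-- The Banach space `c₀` of real sequences converging to zero, with the sup norm. -/
abbrev c0 : Type := ZeroAtInftyContinuousMap ℕ ℝ

/-- The unit vector basis of `c₀`. -/
def e (n : ℕ) : c0 :=
  { toFun := fun i => if i = n then (1 : ℝ) else 0
    continuous_toFun := continuous_of_discreteTopology
    zero_at_infty' := by
      rw [Filter.cocompact_eq_cofinite]
      refine tendsto_const_nhds.congr' ?_
      have h : {n}ᶜ ∈ (Filter.cofinite : Filter ℕ) := by simp [Filter.cofinite]
      filter_upwards [h] with i hi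
      simp only [Set.mem_compl_iff, Set.mem_singleton_iff] at hi
      simp [hi] }

/-- A series `∑ xₙ` is weakly unconditionally Cauchy (w.u.C.) if `∑ |φ (xₙ)| < ∞` for every
continuous linear functional `φ`. -/
def WUC {X : Type*} [NormedAddCommGroup X] [NormedSpace ℝ X] (x : ℕ → X) : Prop :=
  ∀ φ : X →L[ℝ] ℝ, Summable fun n => |φ (x n)|

/-- A sequence is equivalent to the unit vector basis of `c₀`: there are `0 < c ≤ C` with
`c · maxᵢ |aᵢ| ≤ ‖∑ aᵢ xᵢ‖ ≤ C · maxᵢ |aᵢ|` for all finite scalar families. -/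
def IsEquivC0Basis {X : Type*} [NormedAddCommGroup X] [NormedSpace ℝ X] (x : ℕ → X) : Prop :=
  ∃ c C : ℝ, 0 < c ∧ c ≤ C ∧ ∀ (n : ℕ) (a : ℕ → ℝ),
    c * (⨆ i : Fin n, |a i|) ≤ ‖∑ i ∈ Finset.range n, a i • x i‖ ∧
    ‖∑ i ∈ Finset.range n, a i • x i‖ ≤ C * (⨆ i : Fin n, |a i|)

/-- A map (polynomial) is unconditionally converging if for every w.u.C. series `∑ xₙ` the
sequence of values at the partial sums converges in norm. -/
def UCPoly {X Y : Type*} [NormedAddCommGroup X] [NormedSpace ℝ X]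
    [NormedAddCommGroup Y] [NormedSpace ℝ Y] (P : X → Y) : Prop :=
  ∀ x : ℕ → X, WUC x →
    ∃ L : Y, Tendsto (fun n => P (∑ i ∈ Finset.range n, x i)) atTop (𝓝 L)

/-- An operator is unconditionally converging if it maps w.u.C. series to unconditionally
convergent series. -/
def UCOp {X Y : Type*} [NormedAddCommGroup X] [NormedSpace ℝ X]
    [NormedAddCommGroup Y] [NormedSpace ℝ Y] (T : X → Y) : Prop :=
  ∀ x : ℕ → X, WUC x → Summable fun n => T (x n)

/-- A map (polynomial or operator) is compact if the image of the closed unit ball is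
relatively norm compact. -/
def CompactMap {X Y : Type*} [NormedAddCommGroup X] [NormedSpace ℝ X]
    [NormedAddCommGroup Y] [NormedSpace ℝ Y] (P : X → Y) : Prop :=
  IsCompact (closure (P '' Metric.closedBall 0 1))

/-- A set is relatively weakly compact if its closure in the weak topology is compact. -/
def RelWeakCompact {Y : Type*} [NormedAddCommGroup Y] [NormedSpace ℝ Y] (s : Set Y) : Prop :=
  IsCompact (closure ((toWeakSpace ℝ Y) '' s))

/-- A WUC-set is the image of the closed unit ball of `c₀` under a bounded operator. -/
def IsWUCSet {X : Type*} [NormedAddCommGroup X] [NormedSpace ℝ X] (s : Set X) : Prop :=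
  ∃ T : c0 →L[ℝ] X, s = ⇑T '' Metric.closedBall 0 1

open Finset

section C0Estimates

variable {X Y : Type*} [NormedAddCommGroup X] [NormedSpace ℝ X]
  [NormedAddCommGroup Y] [NormedSpace ℝ Y]

def UpperC0Estimate (C : ℝ) (x : ℕ → X) : Prop :=
  ∀ (n : ℕ) (a : ℕ → ℝ), ‖∑ i ∈ range n, a i • x i‖ ≤ C * ⨆ i : Fin n, |a i|

def LowerC0Estimate (c : ℝ) (x : ℕ → X) : Prop :=
  ∀ (n : ℕ) (a : ℕ → ℝ), c * (⨆ i : Fin n, |a i|) ≤ ‖∑ i ∈ range n, a i • x i‖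

theorem isEquivC0Basis_iff {x : ℕ → X} :
    IsEquivC0Basis x ↔ ∃ c C, 0 < c ∧ c ≤ C ∧ LowerC0Estimate c x ∧ UpperC0Estimate C x := by
  simp only [IsEquivC0Basis, LowerC0Estimate, UpperC0Estimate, forall_and]

theorem abs_le_iSup_abs_fin (a : ℕ → ℝ) {n : ℕ} (i : Fin n) : |a i| ≤ ⨆ j : Fin n, |a j| :=
  le_ciSup (f := fun j : Fin n => |a j|) (Finite.bddAbove_range _) i

theorem iSup_abs_fin_nonneg (a : ℕ → ℝ) (n : ℕ) : 0 ≤ ⨆ i : Fin n, |a i| :=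
  Real.iSup_nonneg fun _ => abs_nonneg _

theorem LowerC0Estimate.le_norm {c : ℝ} {x : ℕ → X} (h : LowerC0Estimate c x) (i : ℕ) :
    c ≤ ‖x i‖ := by
  set a : ℕ → ℝ := fun j => if j = i then 1 else 0
  have hsum : ∑ j ∈ range (i + 1), a j • x j = x i := by simp [a, ite_smul]
  have hsup : (⨆ j : Fin (i + 1), |a j|) = 1 := by
    refine le_antisymm (Real.iSup_le (fun j => ?_) zero_le_one) ?_
    · by_cases hj : (j : ℕ) = i <;> simp [a, hj]
    · simpa [a] using abs_le_iSup_abs_fin a (Fin.last i)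
  simpa [hsum, hsup] using h (i + 1) a

theorem IsEquivC0Basis.not_tendsto_norm_zero {x : ℕ → X} (hx : IsEquivC0Basis x) :
    ¬Tendsto (fun n => ‖x n‖) atTop (𝓝 0) := by
  obtain ⟨c, -, hc, -, hlow, -⟩ := isEquivC0Basis_iff.1 hx
  intro h
  obtain ⟨n, hn⟩ := (h.eventually (gt_mem_nhds hc)).exists
  exact hn.not_ge (hlow.le_norm n)

theorem exists_strictMono_forall_le_norm {Z : Type*} [SeminormedAddGroup Z] {y : ℕ → Z}
    (h : ¬Tendsto (fun n => ‖y n‖) atTop (𝓝 0)) :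
    ∃ ε > 0, ∃ φ : ℕ → ℕ, StrictMono φ ∧ ∀ n, ε ≤ ‖y (φ n)‖ := by
  rw [← tendsto_zero_iff_norm_tendsto_zero, Metric.tendsto_atTop] at h
  push Not at h
  obtain ⟨ε, hε, hfreq⟩ := h
  obtain ⟨φ, hφ, hφε⟩ := extraction_of_frequently_atTop (frequently_atTop.2 hfreq)
  exact ⟨ε, hε, φ, hφ, fun n => by simpa using hφε n⟩

theorem UpperC0Estimate.nonneg {C : ℝ} {x : ℕ → X} (h : UpperC0Estimate C x) : 0 ≤ C := by
  simpa using (norm_nonneg _).trans (h 1 fun _ => 1)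

theorem UpperC0Estimate.mono {C C' : ℝ} {x : ℕ → X} (h : UpperC0Estimate C x) (hC : C ≤ C') :
    UpperC0Estimate C' x := fun n a =>
  (h n a).trans (mul_le_mul_of_nonneg_right hC (iSup_abs_fin_nonneg a n))

theorem UpperC0Estimate.norm_sum_fin_le {C : ℝ} {x : ℕ → X} (h : UpperC0Estimate C x)
    {n : ℕ} (c : Fin n → ℝ) (hc : ∀ i, |c i| ≤ 1) :
    ‖∑ i : Fin n, c i • x i‖ ≤ C := by
  set a : ℕ → ℝ := fun i => if hi : i < n then c ⟨i, hi⟩ else 0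
  have ha : ∀ i : Fin n, a i = c i := fun i => dif_pos i.isLt
  calc ‖∑ i : Fin n, c i • x i‖ = ‖∑ i ∈ range n, a i • x i‖ := by
        rw [← Fin.sum_univ_eq_sum_range (fun i => a i • x i)]
        simp only [ha]
    _ ≤ C * ⨆ i : Fin n, |a i| := h n a
    _ ≤ C * 1 := by
        gcongr
        · exact h.nonneg
        exact Real.iSup_le (fun i => (ha i).symm ▸ hc i) zero_le_one
    _ = C := mul_one C

theorem UpperC0Estimate.comp_strictMono {C : ℝ} {x : ℕ → X} (h : UpperC0Estimate C x)
    {s : ℕ → ℕ} (hs : StrictMono s) : UpperC0Estimate C fun i => x (s i) := by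
  classical
  intro n a
  set b : ℕ → ℝ := Function.extend s (fun i => if i < n then a i else 0) 0
  have hb_on : ∀ i < n, b (s i) = a i := fun i hi => by
    simp [b, hs.injective.extend_apply, hi]
  have hb_off : ∀ j ∉ (range n).image s, b j = 0 := by
    intro j hj
    by_cases hjs : ∃ i, s i = j
    · obtain ⟨i, rfl⟩ := hjs
      have hi : ¬i < n := fun hi => hj (mem_image_of_mem s (mem_range.2 hi))
      simp [b, hs.injective.extend_apply, hi]
    · simp [b, Function.extend_apply' _ _ _ hjs]
  have hsum : ∑ j ∈ range (s n), b j • x j = ∑ i ∈ range n, a i • x (s i) := by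
    rw [← sum_subset (s₁ := (range n).image s)]
    · rw [sum_image fun i _ j _ h => hs.injective h]
      exact sum_congr rfl fun i hi => by rw [hb_on i (mem_range.1 hi)]
    · intro j hj
      obtain ⟨i, hi, rfl⟩ := mem_image.1 hj
      exact mem_range.2 (hs (mem_range.1 hi))
    · intro j _ hj
      rw [hb_off j hj, zero_smul]
  have hsup : (⨆ j : Fin (s n), |b j|) ≤ ⨆ i : Fin n, |a i| := by
    refine Real.iSup_le (fun j => ?_) (iSup_abs_fin_nonneg a n)
    by_cases hj : (j : ℕ) ∈ (range n).image s
    · obtain ⟨i, hi, hij⟩ := mem_image.1 hj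
      rw [← hij, hb_on i (mem_range.1 hi)]
      exact abs_le_iSup_abs_fin a ⟨i, mem_range.1 hi⟩
    · rw [hb_off j hj, abs_zero]
      exact iSup_abs_fin_nonneg a n
  calc ‖∑ i ∈ range n, a i • x (s i)‖ = ‖∑ j ∈ range (s n), b j • x j‖ := by rw [hsum]
    _ ≤ C * ⨆ j : Fin (s n), |b j| := h (s n) b
    _ ≤ C * ⨆ i : Fin n, |a i| := mul_le_mul_of_nonneg_left hsup h.nonneg

def boolSign (b : Bool) : ℝ := if b then 1 else -1

theorem abs_boolSign (b : Bool) : |boolSign b| = 1 := by cases b <;> simp [boolSign]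

theorem sum_boolSign_mul_boolSign {n : ℕ} (p q : Fin n) :
    ∑ ε : Fin n → Bool, boolSign (ε p) * boolSign (ε q) = if p = q then 2 ^ n else 0 := by
  split_ifs with hpq
  · subst hpq
    have hsq : ∀ b, boolSign b * boolSign b = 1 := fun b => by cases b <;> simp [boolSign]
    simp [hsq]
  -- flipping the sign at `p` is a sign-reversing involution
  refine sum_involution (fun ε _ => Function.update ε p !(ε p)) (fun ε _ => ?_) (fun ε _ _ h => ?_)
    (fun _ _ => mem_univ _) (fun ε _ => by simp)
  · simp only [Function.update_self, Function.update_of_ne (Ne.symm hpq), boolSign]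
    cases ε p <;> cases ε q <;> norm_num
  · have := congrFun h p
    cases hεp : ε p <;> simp [hεp] at this

/-- Row `l < k` holds the random signs `εˡ`; the last row is `σ` times their product, so that
averaging a product of entries over `ε` leaves only the diagonal (`sum_prod_signCoeffs`). -/
def signCoeffs {k n : ℕ} (σ : Fin n → ℝ) (ε : Fin k → Fin n → Bool) : Fin (k + 1) → Fin n → ℝ :=
  Fin.snoc (fun l i => boolSign (ε l i)) fun i => σ i * ∏ l, boolSign (ε l i)

theorem abs_signCoeffs_le_one {k n : ℕ} {σ : Fin n → ℝ} (hσ : ∀ i, |σ i| ≤ 1)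
    (ε : Fin k → Fin n → Bool) (j : Fin (k + 1)) (i : Fin n) : |signCoeffs σ ε j i| ≤ 1 := by
  induction j using Fin.lastCases with
  | last => simpa [signCoeffs, abs_mul, Finset.abs_prod, abs_boolSign] using hσ i
  | cast l => simp [signCoeffs, abs_boolSign]

theorem sum_prod_signCoeffs {k n : ℕ} (σ : Fin n → ℝ) (r : Fin (k + 1) → Fin n) :
    ∑ ε : Fin k → Fin n → Bool, ∏ j, signCoeffs σ ε j (r j) =
      if r = (fun _ => r (Fin.last k)) then 2 ^ (n * k) * σ (r (Fin.last k)) else 0 := by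
  classical
  have hprod : ∀ ε : Fin k → Fin n → Bool, ∏ j, signCoeffs σ ε j (r j) = σ (r (Fin.last k)) *
      ∏ l, boolSign (ε l (r l.castSucc)) * boolSign (ε l (r (Fin.last k))) := fun ε => by
    simp only [Fin.prod_univ_castSucc, signCoeffs, Fin.snoc_castSucc, Fin.snoc_last,
      prod_mul_distrib]
    ring
  have hconst : r = (fun _ => r (Fin.last k)) ↔ ∀ l : Fin k, r l.castSucc = r (Fin.last k) := by
    refine ⟨fun h l => congrFun h _, fun h => funext fun j => ?_⟩
    induction j using Fin.lastCases with
    | last => rfl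
    | cast l => exact h l
  simp only [hprod, ← mul_sum]
  rw [← Fintype.prod_sum fun (l : Fin k) (row : Fin n → Bool) =>
    boolSign (row (r l.castSucc)) * boolSign (row (r (Fin.last k)))]
  simp only [sum_boolSign_mul_boolSign, prod_ite_zero, mem_univ, true_implies, hconst]
  split_ifs <;> simp [pow_mul, mul_comm (σ _)]

theorem sum_ite_eq_const {k : ℕ} {ι M : Type*} [Fintype ι] [DecidableEq ι] [AddCommMonoid M]
    (f : (Fin (k + 1) → ι) → M) :
    ∑ r : Fin (k + 1) → ι, (if r = (fun _ => r (Fin.last k)) then f r else 0) =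
      ∑ i, f fun _ => i := by
  rw [← sum_filter, ← sum_image (s := univ) (g := fun i _ => i) fun i _ j _ h => congrFun h 0]
  congr 1
  ext r
  simp only [mem_filter, mem_univ, true_and, mem_image]
  exact ⟨fun h => ⟨_, h.symm⟩, fun ⟨i, hi⟩ => hi ▸ rfl⟩

theorem sum_map_signCoeffs {k n : ℕ} (A : MultilinearMap ℝ (fun _ : Fin (k + 1) => X) Y)
    (x : Fin n → X) (σ : Fin n → ℝ) :
    ∑ ε : Fin k → Fin n → Bool, A (fun j => ∑ i, signCoeffs σ ε j i • x i) =
      (2 : ℝ) ^ (n * k) • ∑ i, σ i • A fun _ => x i := by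
  classical
  simp only [A.map_sum, A.map_smul_univ]
  rw [sum_comm]
  simp only [← sum_smul, sum_prod_signCoeffs, ite_smul, zero_smul]
  rw [sum_ite_eq_const]
  simp [smul_sum, mul_smul]

theorem UpperC0Estimate.sum_abs_dual_le {C : ℝ} {x : ℕ → X} (hx : UpperC0Estimate C x) {k : ℕ}
    (A : ContinuousMultilinearMap ℝ (fun _ : Fin (k + 1) => X) Y) (φ : Y →L[ℝ] ℝ) (n : ℕ) :
    ∑ i ∈ range n, |φ (A fun _ => x i)| ≤ ‖φ‖ * (‖A‖ * C ^ (k + 1)) := by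
  set σ : Fin n → ℝ := fun i => SignType.sign (φ (A fun _ => x i))
  have hσ : ∀ i, |σ i| ≤ 1 := fun i => by
    rcases lt_trichotomy (φ (A fun _ => x i)) 0 with h | h | h <;> simp [σ, h]
  set v : (Fin k → Fin n → Bool) → Fin (k + 1) → X := fun ε j => ∑ i, signCoeffs σ ε j i • x i
  have hv : ∀ ε, ‖A (v ε)‖ ≤ ‖A‖ * C ^ (k + 1) := fun ε =>
    A.le_opNorm_mul_pow_of_le <| (pi_norm_le_iff_of_nonneg hx.nonneg).2 fun j =>
      hx.norm_sum_fin_le _ (abs_signCoeffs_le_one hσ ε j)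
  have havg : φ (∑ ε, A (v ε)) = (2 : ℝ) ^ (n * k) * ∑ i ∈ range n, |φ (A fun _ => x i)| := by
    rw [show ∑ ε, A (v ε) = _ from sum_map_signCoeffs A.toMultilinearMap (fun i : Fin n => x i) σ]
    simp only [map_smul, map_sum, smul_eq_mul, σ, ContinuousMultilinearMap.coe_coe, sign_mul_self]
    rw [Fin.sum_univ_eq_sum_range (fun i => |φ (A fun _ => x i)|)]
  have hbound : (2 : ℝ) ^ (n * k) * ∑ i ∈ range n, |φ (A fun _ => x i)| ≤
      (2 : ℝ) ^ (n * k) * (‖φ‖ * (‖A‖ * C ^ (k + 1))) :=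
    calc (2 : ℝ) ^ (n * k) * ∑ i ∈ range n, |φ (A fun _ => x i)|
        ≤ ‖φ (∑ ε, A (v ε))‖ := havg ▸ le_abs_self _
      _ ≤ ‖φ‖ * ∑ ε, ‖A (v ε)‖ := (φ.le_opNorm _).trans (by gcongr; exact norm_sum_le _ _)
      _ ≤ ‖φ‖ * ∑ _ε : Fin k → Fin n → Bool, ‖A‖ * C ^ (k + 1) := by gcongr with ε; exact hv ε
      _ = (2 : ℝ) ^ (n * k) * (‖φ‖ * (‖A‖ * C ^ (k + 1))) := by
        simp only [sum_const, card_univ, Fintype.card_pi, Fintype.card_bool, prod_const,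
          Fintype.card_fin, nsmul_eq_mul, Nat.cast_pow, Nat.cast_ofNat, pow_mul]
        ring
  exact le_of_mul_le_mul_left hbound (by positivity)

theorem UpperC0Estimate.wuc_diag {C : ℝ} {x : ℕ → X} (hx : UpperC0Estimate C x) {k : ℕ}
    (A : ContinuousMultilinearMap ℝ (fun _ : Fin (k + 1) => X) Y) :
    WUC fun i => A fun _ => x i :=
  fun φ => summable_of_sum_range_le (fun _ => abs_nonneg _) (hx.sum_abs_dual_le A φ)

theorem WUC.tendsto_dual_zero {y : ℕ → Y} (hy : WUC y) (φ : Y →L[ℝ] ℝ) :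
    Tendsto (fun n => φ (y n)) atTop (𝓝 0) :=
  (tendsto_zero_iff_abs_tendsto_zero _).2 (hy φ).tendsto_atTop_zero

theorem upperC0Estimate_of_sum_abs_dual_le {y : ℕ → Y} {K : ℝ} (hK : 0 ≤ K)
    (h : ∀ (φ : Y →L[ℝ] ℝ) (n : ℕ), ∑ i ∈ range n, |φ (y i)| ≤ ‖φ‖ * K) :
    UpperC0Estimate K y := by
  intro n a
  refine NormedSpace.norm_le_dual_bound ℝ _ (by positivity [iSup_abs_fin_nonneg a n]) fun φ => ?_
  calc ‖φ (∑ i ∈ range n, a i • y i)‖ = |∑ i ∈ range n, a i * φ (y i)| := by simp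
    _ ≤ ∑ i ∈ range n, |a i| * |φ (y i)| := by
        simpa only [abs_mul] using abs_sum_le_sum_abs (fun i => a i * φ (y i)) (range n)
    _ ≤ ∑ i ∈ range n, (⨆ j : Fin n, |a j|) * |φ (y i)| := by
        gcongr with i hi
        exact abs_le_iSup_abs_fin a ⟨i, mem_range.1 hi⟩
    _ ≤ (⨆ j : Fin n, |a j|) * (‖φ‖ * K) := by
        rw [← mul_sum]
        exact mul_le_mul_of_nonneg_left (h φ n) (iSup_abs_fin_nonneg a n)
    _ = K * (⨆ j : Fin n, |a j|) * ‖φ‖ := by ring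

theorem Submodule.exists_finset_norming_dual (E : Submodule ℝ Y) [FiniteDimensional ℝ E] {ρ : ℝ}
    (hρ : ρ < 1) :
    ∃ Ψ : Finset (Y →L[ℝ] ℝ), (∀ ψ ∈ Ψ, ‖ψ‖ ≤ 1) ∧ ∀ u ∈ E, ∃ ψ ∈ Ψ, ρ * ‖u‖ ≤ ψ u := by
  classical
  choose ψ hψ1 hψ using fun y : Y => exists_dual_vector'' ℝ y
  obtain ⟨t, htS, htfin, hcover⟩ :=
    ((isCompact_sphere (0 : E) 1).image continuous_subtype_val).finite_cover_balls (sub_pos.2 hρ)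
  refine ⟨insert 0 (htfin.toFinset.image ψ), ?_, fun u hu => ?_⟩
  · simp only [mem_insert, mem_image, Set.Finite.mem_toFinset]
    rintro _ (rfl | ⟨w, -, rfl⟩)
    exacts [by simp, hψ1 w]
  rcases eq_or_ne u 0 with rfl | hu0
  · exact ⟨0, mem_insert_self _ _, by simp⟩
  have hnorm : 0 < ‖u‖ := norm_pos_iff.2 hu0
  have hunit : ‖u‖⁻¹ • u ∈ Subtype.val '' sphere (0 : E) 1 :=
    ⟨⟨_, E.smul_mem _ hu⟩, by simp [norm_smul, hnorm.ne'], rfl⟩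
  obtain ⟨w, hwt, hw⟩ := Set.mem_iUnion₂.1 (hcover hunit)
  obtain ⟨w', hw', rfl⟩ := htS hwt
  have hw1 : ‖(w' : Y)‖ = 1 := by simpa using hw'
  refine ⟨ψ w', mem_insert_of_mem (mem_image_of_mem _ (htfin.mem_toFinset.2 hwt)), ?_⟩
  have hclose : ρ ≤ ψ w' (‖u‖⁻¹ • u) :=
    calc ρ ≤ 1 - ‖‖u‖⁻¹ • u - w'‖ := by rw [← dist_eq_norm]; linarith [mem_ball.1 hw]
      _ ≤ ψ w' w' + ψ w' (‖u‖⁻¹ • u - w') := by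
        have h := (ψ w').le_of_opNorm_le (hψ1 w') (‖u‖⁻¹ • u - w')
        rw [Real.norm_eq_abs, one_mul] at h
        rw [hψ, hw1, RCLike.ofReal_one]
        linarith [neg_abs_le (ψ w' (‖u‖⁻¹ • u - w'))]
      _ = ψ w' (‖u‖⁻¹ • u) := by rw [← map_add, add_sub_cancel]
  calc ρ * ‖u‖ ≤ ψ w' (‖u‖⁻¹ • u) * ‖u‖ := by gcongr
    _ = ψ w' u := by rw [map_smul, smul_eq_mul, mul_comm, ← mul_assoc, mul_inv_cancel₀ hnorm.ne',
      one_mul]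

theorem eventually_mul_norm_le_norm_add_smul {y : ℕ → Y}
    (hy0 : ∀ φ : Y →L[ℝ] ℝ, Tendsto (fun n => φ (y n)) atTop (𝓝 0)) {ε : ℝ} (hε : 0 < ε)
    (hy : ∀ᶠ n in atTop, ε ≤ ‖y n‖) (E : Submodule ℝ Y) [FiniteDimensional ℝ E] {r : ℝ}
    (hr : r < 1) :
    ∀ᶠ n in atTop, ∀ u ∈ E, ∀ t : ℝ, r * ‖u‖ ≤ ‖u + t • y n‖ := by
  obtain ⟨Ψ, hΨ1, hΨ⟩ := E.exists_finset_norming_dual (show (1 + r) / 2 < 1 by linarith)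
  have hη : 0 < (1 - r) * ε / 4 := by have := sub_pos.2 hr; positivity
  have hsmall : ∀ᶠ n in atTop, ∀ ψ ∈ Ψ, |ψ (y n)| < (1 - r) * ε / 4 :=
    (eventually_all_finset Ψ).2 fun ψ _ =>
      ((tendsto_zero_iff_abs_tendsto_zero _).1 (hy0 ψ)).eventually (gt_mem_nhds hη)
  filter_upwards [hy, hsmall] with n hyn hψn u hu t
  rcases le_or_gt (|t| * ε) (2 * ‖u‖) with ht | ht
  · -- `u` is normed by some `ψ ∈ Ψ`, which barely sees the small multiple `t • y n`
    obtain ⟨ψ, hψΨ, hψu⟩ := hΨ u hu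
    have hψ : ψ (u + t • y n) ≤ ‖u + t • y n‖ :=
      (le_abs_self _).trans ((ψ.le_of_opNorm_le (hΨ1 ψ hψΨ) _).trans_eq (one_mul _))
    have hty : |t * ψ (y n)| ≤ (1 - r) / 2 * ‖u‖ := by
      rw [abs_mul]
      nlinarith [hψn ψ hψΨ, abs_nonneg t, abs_nonneg (ψ (y n))]
    rw [map_add, map_smul, smul_eq_mul] at hψ
    linarith [neg_abs_le (t * ψ (y n))]
  · -- `t • y n` dominates
    have h := norm_sub_norm_le (t • y n) (-u)
    rw [sub_neg_eq_add, add_comm, norm_neg, norm_smul, Real.norm_eq_abs] at h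
    nlinarith [mul_le_mul_of_nonneg_left hyn (abs_nonneg t), norm_nonneg u]

theorem extraction_succ_of_eventually {R : ℕ → ℕ → ℕ → Prop}
    (h : ∀ p m, ∀ᶠ n in atTop, R p m n) :
    ∃ s : ℕ → ℕ, StrictMono s ∧ ∀ p, R p (s p) (s (p + 1)) := by
  choose N hN using fun p m => eventually_atTop.1 (h p m)
  set s : ℕ → ℕ := fun p => Nat.rec 0 (fun p sp => max (sp + 1) (N p sp)) p
  have hs_succ : ∀ p, s (p + 1) = max (s p + 1) (N p (s p)) := fun _ => rfl
  refine ⟨s, strictMono_nat_of_lt_succ fun p => ?_, fun p => hN p _ _ ?_⟩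
  · exact (hs_succ p).symm ▸ lt_max_of_lt_left (lt_add_one _)
  · exact (hs_succ p).symm ▸ le_max_right _ _

theorem exists_strictMono_norm_sum_range_le_two_mul {y : ℕ → Y}
    (hy0 : ∀ φ : Y →L[ℝ] ℝ, Tendsto (fun n => φ (y n)) atTop (𝓝 0)) {ε : ℝ} (hε : 0 < ε)
    (hy : ∀ᶠ n in atTop, ε ≤ ‖y n‖) :
    ∃ s : ℕ → ℕ, StrictMono s ∧ ∀ (a : ℕ → ℝ) {m n : ℕ}, m ≤ n →
      ‖∑ i ∈ range m, a i • y (s i)‖ ≤ 2 * ‖∑ i ∈ range n, a i • y (s i)‖ := by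
  -- `K` increases from `1` to `2`, and passing from `p + 1` to `p + 2` terms costs at most the
  -- factor `K (p + 2) / K (p + 1)`, so that `K p * ‖S p‖` is monotone in `p`
  set K : ℕ → ℝ := fun p => 2 - ((p : ℝ) + 1)⁻¹
  have hK1 : ∀ p, 1 ≤ K p := fun p => by
    have : ((p : ℝ) + 1)⁻¹ ≤ 1 := inv_le_one_of_one_le₀ (by simp)
    simp only [K]; linarith
  have hK2 : ∀ p, K p ≤ 2 := fun p => by
    simp only [K]; linarith [inv_pos.2 (p.cast_add_one_pos (α := ℝ))]
  have hKlt : ∀ p, K p < K (p + 1) := fun p => by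
    simp only [K]; push_cast
    linarith [inv_strictAnti₀ (p.cast_add_one_pos (α := ℝ)) (lt_add_one ((p : ℝ) + 1))]
  have hN : ∀ p m : ℕ, ∀ᶠ n in atTop, ∀ u ∈ Submodule.span ℝ (y '' Set.Iic m), ∀ t : ℝ,
      K (p + 1) / K (p + 2) * ‖u‖ ≤ ‖u + t • y n‖ := fun p m =>
    have := FiniteDimensional.span_of_finite ℝ ((Set.finite_Iic m).image y)
    eventually_mul_norm_le_norm_add_smul hy0 hε hy _ <|
      (div_lt_one (by linarith [hK1 (p + 2)])).2 (hKlt _)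
  obtain ⟨s, hs, hsN⟩ := extraction_succ_of_eventually hN
  refine ⟨s, hs, fun a m n hmn => ?_⟩
  set S : ℕ → Y := fun p => ∑ i ∈ range p, a i • y (s i)
  have hmono : Monotone fun p => K p * ‖S p‖ := by
    refine monotone_nat_of_le_succ fun p => ?_
    cases p with
    | zero => simp only [S, range_zero, sum_empty, norm_zero, mul_zero]; positivity
    | succ p =>
      have hmem : S (p + 1) ∈ Submodule.span ℝ (y '' Set.Iic (s p)) :=
        Submodule.sum_mem _ fun i hi => Submodule.smul_mem _ _ <| Submodule.subset_span
          ⟨s i, hs.monotone (Nat.le_of_lt_succ (mem_range.1 hi)), rfl⟩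
      have h := hsN p _ hmem (a (p + 1))
      rw [← sum_range_succ, div_mul_eq_mul_div, div_le_iff₀ (by linarith [hK1 (p + 2)])] at h
      simpa only [S, mul_comm (K (p + 2))] using h
  calc ‖S m‖ ≤ K m * ‖S m‖ := le_mul_of_one_le_left (norm_nonneg _) (hK1 m)
    _ ≤ K n * ‖S n‖ := hmono hmn
    _ ≤ 2 * ‖S n‖ := mul_le_mul_of_nonneg_right (hK2 n) (norm_nonneg _)

theorem lowerC0Estimate_of_norm_sum_range_le {y : ℕ → Y} {K ε : ℝ} (hK : 0 < K) (hε : 0 < ε)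
    (hy : ∀ i, ε ≤ ‖y i‖)
    (hbasic : ∀ (a : ℕ → ℝ) {m n : ℕ}, m ≤ n →
      ‖∑ i ∈ range m, a i • y i‖ ≤ K * ‖∑ i ∈ range n, a i • y i‖) :
    LowerC0Estimate (ε / (2 * K)) y := by
  intro n a
  set S : ℕ → Y := fun p => ∑ i ∈ range p, a i • y i
  have hcoeff : ∀ i : Fin n, |a i| ≤ 2 * K * ‖S n‖ / ε := fun i => by
    have hterm : ε * |a i| ≤ ‖S (i + 1)‖ + ‖S i‖ := calc
      ε * |a i| ≤ ‖a i • y i‖ := by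
        rw [norm_smul, Real.norm_eq_abs, mul_comm]
        exact mul_le_mul_of_nonneg_left (hy i) (abs_nonneg _)
      _ = ‖S (i + 1) - S i‖ := by simp only [S, sum_range_succ, add_sub_cancel_left]
      _ ≤ ‖S (i + 1)‖ + ‖S i‖ := norm_sub_le _ _
    rw [le_div_iff₀ hε]
    linarith [hbasic a i.isLt, hbasic a i.isLt.le]
  calc ε / (2 * K) * ⨆ i : Fin n, |a i| ≤ ε / (2 * K) * (2 * K * ‖S n‖ / ε) := by
        gcongr
        exact Real.iSup_le hcoeff (by positivity)
    _ = ‖S n‖ := by field_simp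

theorem UpperC0Estimate.exists_subseq_isEquivC0Basis_diag {C : ℝ} {x : ℕ → X}
    (hx : UpperC0Estimate C x) {k : ℕ}
    (A : ContinuousMultilinearMap ℝ (fun _ : Fin (k + 1) => X) Y) {ε : ℝ} (hε : 0 < ε) (hAx : ∀ n, ε ≤ ‖A fun _ => x n‖) :
    ∃ s : ℕ → ℕ, StrictMono s ∧ IsEquivC0Basis fun i => A fun _ => x (s i) := by
  have hupper := upperC0Estimate_of_sum_abs_dual_le (by positivity [hx.nonneg])
    (hx.sum_abs_dual_le A)
  obtain ⟨s, hs, hbasic⟩ := exists_strictMono_norm_sum_range_le_two_mul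
    (hx.wuc_diag A).tendsto_dual_zero hε (Eventually.of_forall hAx)
  refine ⟨s, hs, isEquivC0Basis_iff.2 ⟨ε / (2 * 2), max (‖A‖ * C ^ (k + 1)) (ε / (2 * 2)),
    by positivity, le_max_right _ _, ?_, (hupper.comp_strictMono hs).mono (le_max_left _ _)⟩⟩
  exact lowerC0Estimate_of_norm_sum_range_le two_pos hε (fun i => hAx (s i)) hbasic

end C0Estimates

theorem subseq_equiv_iff_norm_not_tendsto_zero_general {X Y : Type*}
    [NormedAddCommGroup X] [NormedSpace ℝ X]
    [NormedAddCommGroup Y] [NormedSpace ℝ Y]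
    (k : ℕ) (hk : 1 ≤ k) (A : ContinuousMultilinearMap ℝ (fun _ : Fin k => X) Y)
    (P : X → Y) (hP : P = fun x => A fun _ => x) :
    (∀ x : ℕ → X, IsEquivC0Basis x →
      ∃ s : ℕ → ℕ, StrictMono s ∧ IsEquivC0Basis fun i => P (x (s i))) ↔
    (∀ x : ℕ → X, IsEquivC0Basis x →
      ¬ Tendsto (fun n => ‖P (x n)‖) atTop (𝓝 0)) := by
  subst hP
  obtain ⟨k, rfl⟩ := Nat.exists_eq_add_of_le' hk
  refine ⟨fun hB x hx hx0 => ?_, fun hE x hx => ?_⟩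
  · obtain ⟨s, hs, hPs⟩ := hB x hx
    exact hPs.not_tendsto_norm_zero (hx0.comp hs.tendsto_atTop)
  · obtain ⟨ε, hε, φ, hφ, hφε⟩ := exists_strictMono_forall_le_norm (hE x hx)
    obtain ⟨-, C, -, -, -, hC⟩ := isEquivC0Basis_iff.1 hx
    obtain ⟨s, hs, hAs⟩ := (hC.comp_strictMono hφ).exists_subseq_isEquivC0Basis_diag A hε hφε
    exact ⟨φ ∘ s, hφ.comp hs, hAs⟩

/-- Equivalence of conditions (B) and (E) of the main theorem of Section 3. -/
theorem subseq_equiv_iff_norm_not_tendsto_zero {X Y : Type*}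
    [NormedAddCommGroup X] [NormedSpace ℝ X] [CompleteSpace X]
    [NormedAddCommGroup Y] [NormedSpace ℝ Y] [CompleteSpace Y]
    (k : ℕ) (hk : 1 ≤ k) (A : ContinuousMultilinearMap ℝ (fun _ : Fin k => X) Y)
    (P : X → Y) (hP : P = fun x => A fun _ => x) :
    (∀ x : ℕ → X, IsEquivC0Basis x →
      ∃ s : ℕ → ℕ, StrictMono s ∧ IsEquivC0Basis fun i => P (x (s i))) ↔
    (∀ x : ℕ → X, IsEquivC0Basis x →
      ¬ Tendsto (fun n => ‖P (x n)‖) atTop (𝓝 0)) :=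
  subseq_equiv_iff_norm_not_tendsto_zero_general k hk A P hP
end
end

section
/- Let X and Y be real Banach spaces, k ≥ 1 an integer and P : X → Y a continuous k-homogeneous polynomial. Suppose that for every sequence (xₙ) in X equivalent to the c₀-basis, the sequence ‖P(xₙ)‖ does not converge to 0. Then P is an Orlicz–Pettis polynomial: for every real Banach space Z and every bounded linear operator T : Z → X, if the polynomial P∘T is unconditionally converging, then T is an unconditionally converging operator. -/
open Filter Topology Metric

noncomputable section

/-!
If `T` is not unconditionally converging, some w.u.C. series `∑ zᵢ` has `∑ T zᵢ` not summable,
and grouping the `zᵢ` into disjoint blocks gives a w.u.C. series `∑ vⱼ` with `‖T vⱼ‖ ≥ ε`. A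
Bessaga–Pełczyński gliding hump (against norming functionals corrected by a weak-* cluster point of
them) extracts a subsequence `yⱼ` of the `vⱼ` for which `T yⱼ` is equivalent to the `c₀`-basis.

On the other hand, for the partial sums `Sₘ` of `∑ yⱼ`, interleaving `c yₘ` and `(1 - c) yₘ` gives
a w.u.C. series passing through both `Sₘ` and `Sₘ + c yₘ`, so `Q (Sₘ + c yₘ) - Q Sₘ → 0` for the
unconditionally converging polynomial `Q = P ∘ T`. The `k`-th forward difference of
`t ↦ Q (Sₘ + t yₘ)` is `k! Q yₘ`, hence `P (T yₘ) → 0`, contradicting the hypothesis.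
-/

open Finset Function

section FiniteDifferences

variable {M G : Type*} [AddCommMonoid M] [AddCommGroup G]

theorem fwdDiff_iter_sub_const (h : M) (f : M → G) (g : G) {n : ℕ} (hn : n ≠ 0) :
    (fwdDiff h)^[n] (fun y => f y - g) = (fwdDiff h)^[n] f := by
  obtain ⟨n, rfl⟩ := Nat.exists_eq_succ_of_ne_zero hn
  have : fwdDiff h (fun y => f y - g) = fwdDiff h f :=
    funext fun y => sub_sub_sub_cancel_right _ _ _
  rw [iterate_succ_apply, iterate_succ_apply, this]

theorem fwdDiff_iter_smul_const {R : Type*} [Ring R] [Module R G] (h : M) (f : M → R) (v : G)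
    (n : ℕ) : (fwdDiff h)^[n] (fun y => f y • v) = fun y => (fwdDiff h)^[n] f y • v := by
  induction n generalizing f with
  | zero => rfl
  | succ n ih =>
    rw [iterate_succ_apply, iterate_succ_apply, fwdDiff_smul_const]
    exact ih _

end FiniteDifferences

namespace MultilinearMap

variable {R E F : Type*} [CommRing R] [AddCommGroup E] [Module R E] [AddCommGroup F] [Module R F]
  {k : ℕ}

theorem apply_add_smul_eq_sum (A : MultilinearMap R (fun _ : Fin k => E) F) (u b : E) (t : R) :
    A (fun _ => u + t • b) =
      ∑ s : Finset (Fin k), t ^ s.card • A (s.piecewise (fun _ => b) (fun _ => u)) := by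
  classical
  rw [show (fun _ : Fin k => u + t • b) = (fun _ => t • b) + fun _ => u from
    funext fun _ => add_comm _ _, map_add_univ]
  refine sum_congr rfl fun s _ => ?_
  rw [← prod_const, ← map_piecewise_smul]
  congr 1
  exact s.piecewise_congr (fun i hi => by rw [s.piecewise_eq_of_mem _ _ hi])
    (fun i hi => by rw [s.piecewise_eq_of_notMem _ _ hi])

theorem fwdDiff_iter_apply_add_smul (A : MultilinearMap R (fun _ : Fin k => E) F) (u b : E) :
    (fwdDiff 1)^[k] (fun t : R => A (fun _ => u + t • b)) =
      fun _ => (k.factorial : R) • A (fun _ => b) := by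
  classical
  simp_rw [apply_add_smul_eq_sum, ← sum_fn, fwdDiff_iter_finsetSum, fwdDiff_iter_smul_const]
  rw [sum_eq_single univ]
  · simp [fwdDiff_iter_eq_factorial]
  · intro s _ hs
    have hlt : s.card < k := by simpa using card_lt_card (ssubset_univ_iff.mpr hs)
    simp only [fwdDiff_iter_pow_eq_zero_of_lt hlt, Pi.zero_apply, zero_smul]
    rfl
  · simp

end MultilinearMap

namespace WUC

variable {X Y : Type*} [NormedAddCommGroup X] [NormedSpace ℝ X] [NormedAddCommGroup Y]
  [NormedSpace ℝ Y] {x : ℕ → X}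

theorem map (hx : WUC x) (T : X →L[ℝ] Y) : WUC fun n => T (x n) :=
  fun φ => hx (φ.comp T)

theorem comp_injective (hx : WUC x) {n : ℕ → ℕ} (hn : Injective n) :
    WUC fun j => x (n j) :=
  fun φ => (hx φ).comp_injective hn

theorem tendsto_apply_zero (hx : WUC x) (φ : StrongDual ℝ X) :
    Tendsto (fun n => φ (x n)) atTop (𝓝 0) :=
  tendsto_zero_iff_abs_tendsto_zero _ |>.mpr (hx φ).tendsto_atTop_zero

theorem sum_of_pairwise_disjoint (hx : WUC x) {B : ℕ → Finset ℕ}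
    (hB : Pairwise (Disjoint on B)) : WUC fun j => ∑ i ∈ B j, x i := by
  intro φ
  have hsum : Summable fun j => ∑ i ∈ B j, |φ (x i)| := by
    refine summable_of_sum_range_le (c := ∑' i, |φ (x i)|) (fun j => by positivity) fun m => ?_
    rw [← sum_biUnion (hB.set_pairwise _)]
    exact (hx φ).sum_le_tsum _ fun i _ => abs_nonneg _
  refine hsum.of_nonneg_of_le (fun j => abs_nonneg _) fun j => ?_
  simpa using abs_sum_le_sum_abs (fun i => φ (x i)) (B j)

theorem exists_norm_sum_smul_le_of_abs_le_one (hx : WUC x) :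
    ∃ M, ∀ (m : ℕ) (a : ℕ → ℝ), (∀ i < m, |a i| ≤ 1) → ‖∑ i ∈ range m, a i • x i‖ ≤ M := by
  let I := {p : ℕ × (ℕ → ℝ) // ∀ i < p.1, |p.2 i| ≤ 1}
  let g : I → StrongDual ℝ (StrongDual ℝ X) := fun p =>
    NormedSpace.inclusionInDoubleDual ℝ X (∑ i ∈ range p.1.1, p.1.2 i • x i)
  have hpoint : ∀ φ, ∃ C, ∀ p, ‖g p φ‖ ≤ C := by
    refine fun φ => ⟨∑' i, |φ (x i)|, fun ⟨⟨m, a⟩, ha⟩ => ?_⟩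
    rw [NormedSpace.dual_def]
    simp only [map_sum, map_smul, smul_eq_mul, Real.norm_eq_abs]
    calc |∑ i ∈ range m, a i * φ (x i)| ≤ ∑ i ∈ range m, |φ (x i)| := by
          refine (abs_sum_le_sum_abs _ _).trans (sum_le_sum fun i hi => ?_)
          rw [abs_mul]
          exact mul_le_of_le_one_left (abs_nonneg _) (ha i (mem_range.mp hi))
      _ ≤ ∑' i, |φ (x i)| := (hx φ).sum_le_tsum _ fun i _ => abs_nonneg _
  obtain ⟨M, hM⟩ := banach_steinhaus hpoint
  refine ⟨M, fun m a ha => ?_⟩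
  rw [← (NormedSpace.inclusionInDoubleDualLi ℝ (E := X)).norm_map]
  exact hM ⟨(m, a), ha⟩

theorem exists_norm_sum_smul_le (hx : WUC x) :
    ∃ M, 0 ≤ M ∧
      ∀ (m : ℕ) (a : ℕ → ℝ), ‖∑ i ∈ range m, a i • x i‖ ≤ M * ⨆ i : Fin m, |a i| := by
  obtain ⟨M, hM⟩ := hx.exists_norm_sum_smul_le_of_abs_le_one
  have hM0 : 0 ≤ M := by simpa using hM 0 0
  refine ⟨M, hM0, fun m a => ?_⟩
  set s := ⨆ i : Fin m, |a i|
  have has : ∀ i < m, |a i| ≤ s := fun i hi =>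
    le_ciSup (f := fun i : Fin m => |a i|) (Set.finite_range _).bddAbove ⟨i, hi⟩
  rcases (show 0 ≤ s from Real.iSup_nonneg fun i => abs_nonneg _).eq_or_lt with hs | hs
  · rw [← hs, mul_zero, norm_le_zero_iff]
    exact sum_eq_zero fun i hi => by
      rw [abs_nonpos_iff.mp ((has i (mem_range.mp hi)).trans hs.symm.le), zero_smul]
  · have := hM m (fun i => a i / s) fun i hi => by
      rw [abs_div, abs_of_pos hs]; exact div_le_one_of_le₀ (has i hi) hs.le
    calc ‖∑ i ∈ range m, a i • x i‖ = s * ‖∑ i ∈ range m, (a i / s) • x i‖ := by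
          rw [← norm_smul_of_nonneg hs.le, smul_sum]
          simp_rw [smul_smul, mul_div_cancel₀ _ hs.ne']
      _ ≤ M * s := by rw [mul_comm]; exact mul_le_mul_of_nonneg_right this hs.le

end WUC

theorem exists_pairwise_disjoint_norm_sum_ge {X : Type*} [NormedAddCommGroup X]
    [CompleteSpace X] {f : ℕ → X} (hf : ¬ Summable f) :
    ∃ ε > 0, ∃ B : ℕ → Finset ℕ, Pairwise (Disjoint on B) ∧ ∀ j, ε ≤ ‖∑ i ∈ B j, f i‖ := by
  classical
  rw [summable_iff_vanishing_norm] at hf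
  push Not at hf
  obtain ⟨ε, hε, H⟩ := hf
  choose t ht using H
  let acc : ℕ → Finset ℕ := fun j => Nat.rec ∅ (fun _ s => s ∪ t s) j
  have hmono : Monotone acc := monotone_nat_of_le_succ fun j => subset_union_left
  refine ⟨ε, hε, fun j => t (acc j), (pairwise_disjoint_on _).mpr fun i j hij => ?_,
    fun j => (ht _).2⟩
  have hsub : t (acc i) ⊆ acc j := subset_union_right.trans (hmono hij)
  exact (disjoint_of_subset_right hsub (ht (acc j)).1).symm

section UnconditionallyConverging

variable {Z Y : Type*} [NormedAddCommGroup Z] [NormedSpace ℝ Z] [NormedAddCommGroup Y]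
  [NormedSpace ℝ Y]

theorem UCPoly.tendsto_sub {Q : Z → Y} (hQ : UCPoly Q) {y : ℕ → Z} (hy : WUC y) (c : ℝ) :
    Tendsto (fun m => Q (∑ i ∈ range m, y i + c • y m) - Q (∑ i ∈ range m, y i)) atTop
      (𝓝 0) := by
  -- `c y₀ + (1 - c) y₀ + c y₁ + (1 - c) y₁ + ⋯` has partial sums `Sₘ` and `Sₘ + c yₘ`.
  set x : ℕ → Z := fun n => (if Even n then c else 1 - c) • y (n / 2)
  have hdiv : ∀ k, (2 * k + 1) / 2 = k := by omega
  have hx : WUC x := fun φ => by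
    refine Summable.even_add_odd ?_ ?_
    · simpa [x, abs_mul] using (hy φ).mul_left |c|
    · simpa [x, abs_mul, hdiv] using (hy φ).mul_left |1 - c|
  have h_even : ∀ m, ∑ i ∈ range (2 * m), x i = ∑ i ∈ range m, y i := by
    intro m
    induction m with
    | zero => simp
    | succ m ih =>
      rw [Nat.mul_succ, sum_range_succ, sum_range_succ, ih, sum_range_succ]
      simp only [x, hdiv, even_two_mul, Nat.even_add_one, not_true_eq_false, if_true, if_false,
        Nat.mul_div_cancel_left _ two_pos]
      rw [add_assoc, ← add_smul, add_sub_cancel, one_smul]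
  have h_odd : ∀ m, ∑ i ∈ range (2 * m + 1), x i = ∑ i ∈ range m, y i + c • y m := by
    intro m
    rw [sum_range_succ, h_even]
    simp [x]
  obtain ⟨L, hL⟩ := hQ x hx
  have h2m : Tendsto (fun m : ℕ => 2 * m) atTop atTop := tendsto_id.const_mul_atTop' two_pos
  have h2m1 : Tendsto (fun m : ℕ => 2 * m + 1) atTop atTop := (tendsto_add_atTop_nat 1).comp h2m
  simpa [comp_def, h_odd, h_even] using (hL.comp h2m1).sub (hL.comp h2m)

theorem UCPoly.tendsto_apply_diag_zero {k : ℕ} (hk : k ≠ 0)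
    (A : MultilinearMap ℝ (fun _ : Fin k => Z) Y) (hA : UCPoly fun z => A fun _ => z)
    {y : ℕ → Z} (hy : WUC y) : Tendsto (fun m => A fun _ => y m) atTop (𝓝 0) := by
  set S : ℕ → Z := fun m => ∑ i ∈ range m, y i
  have hdiff : ∀ m, (k.factorial : ℝ) • A (fun _ => y m) =
      ∑ j ∈ range (k + 1), ((-1 : ℤ) ^ (k - j) * k.choose j) •
        (A (fun _ => S m + (j : ℝ) • y m) - A (fun _ => S m)) := by
    intro m
    have := congr_fun ((fwdDiff_iter_sub_const 1 _ (A fun _ => S m) hk).trans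
      (A.fwdDiff_iter_apply_add_smul (S m) (y m))) 0
    simpa [fwdDiff_iter_eq_sum_shift] using this.symm
  have hlim : Tendsto (fun m => (k.factorial : ℝ) • A (fun _ => y m)) atTop (𝓝 0) := by
    simp_rw [hdiff]
    simpa using tendsto_finsetSum _ fun (j : ℕ) _ =>
      (hA.tendsto_sub hy (j : ℝ)).const_smul ((-1 : ℤ) ^ (k - j) * k.choose j)
  simpa [smul_smul, Nat.factorial_ne_zero] using hlim.const_smul (k.factorial : ℝ)⁻¹

end UnconditionallyConverging

theorem Filter.exists_strictMono_forall_of_eventually {F : Filter ℕ} [F.NeBot] (hF : F ≤ atTop)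
    {P : ℕ → ℕ → Prop} {R : ℕ → ℕ → ℕ → ℕ → Prop} (hP : ∀ j, ∀ᶠ b in F, P j b)
    (hR : ∀ i j a, ∀ᶠ b in F, R i j a b) :
    ∃ n : ℕ → ℕ, StrictMono n ∧ (∀ j, P j (n j)) ∧ ∀ i j, i < j → R i j (n i) (n j) := by
  classical
  have hnext : ∀ j (a : ℕ → ℕ), ∃ b, (∀ i < j, a i < b ∧ R i j (a i) b) ∧ P j b := fun j a => by
    have : ∀ᶠ b in F, ∀ i ∈ range j, a i < b ∧ R i j (a i) b :=
      (eventually_all_finset _).2 fun i _ =>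
        ((eventually_gt_atTop (a i)).filter_mono hF).and (hR i j (a i))
    obtain ⟨b, hb, hPb⟩ := (this.and (hP j)).exists
    exact ⟨b, fun i hi => hb i (mem_range.2 hi), hPb⟩
  choose next hnext using hnext
  let pre : ℕ → ℕ → ℕ := fun j => Nat.rec (fun _ => 0) (fun j a => update a j (next j a)) j
  have hpre : ∀ j, ∀ i < j, pre j i = next i (pre i) := by
    intro j
    induction j with
    | zero => intro i hi; omega
    | succ j ih =>
      intro i hi
      change update (pre j) j (next j (pre j)) i = _
      rcases Nat.lt_succ_iff_lt_or_eq.mp hi with h | rfl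
      · rw [update_of_ne h.ne, ih i h]
      · rw [update_self]
  clear_value pre
  refine ⟨fun j => next j (pre j), strictMono_nat_of_lt_succ fun j => ?_, fun j => (hnext j _).2,
    fun i j hij => ?_⟩
  · have := ((hnext (j + 1) (pre (j + 1))).1 j (lt_add_one j)).1
    rwa [hpre (j + 1) j (lt_add_one j)] at this
  · have := ((hnext j (pre j)).1 i hij).2
    rwa [hpre j i hij] at this

section LowerEstimate

variable {X : Type*} [NormedAddCommGroup X] [NormedSpace ℝ X]

theorem StrongDual.exists_tendsto_ultrafilter {ι : Type*} (𝒰 : Ultrafilter ι)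
    (φ : ι → StrongDual ℝ X) {r : ℝ} (hφ : ∀ i, ‖φ i‖ ≤ r) :
    ∃ Φ : StrongDual ℝ X, ‖Φ‖ ≤ r ∧ ∀ x, Tendsto (fun i => φ i x) 𝒰 (𝓝 (Φ x)) := by
  obtain ⟨Φ, hΦ, hlim⟩ :=
    (WeakDual.isCompact_closedBall (0 : StrongDual ℝ X) r).ultrafilter_le_nhds
      (𝒰.map fun i => WeakDual.toStrongDual.symm (φ i))
      (le_principal_iff.2 (mem_map.2 (Eventually.of_forall fun i => by simpa using hφ i)))
  refine ⟨WeakDual.toStrongDual Φ, by simpa using hΦ, fun x => ?_⟩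
  exact ((WeakDual.eval_continuous x).tendsto Φ).comp hlim

theorem le_norm_sum_smul_of_almost_biorthogonal {x : ℕ → X} {ψ : ℕ → StrongDual ℝ X}
    {δ : ℕ → ℝ} {c C : ℝ} (hC : 0 < C) (hψ : ∀ j, ‖ψ j‖ ≤ C) (hdiag : ∀ j, c ≤ ψ j (x j))
    (hoff : ∀ i j, i ≠ j → |ψ j (x i)| ≤ δ i) (hδ : ∀ m, ∑ i ∈ range m, δ i ≤ c / 2)
    (m : ℕ) (a : ℕ → ℝ) : c / (2 * C) * ⨆ i : Fin m, |a i| ≤ ‖∑ i ∈ range m, a i • x i‖ := by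
  rcases m.eq_zero_or_pos with rfl | hm
  · simp
  have hc : 0 ≤ c := by linarith [show (0 : ℝ) ≤ c / 2 by simpa using hδ 0]
  have hδ0 : ∀ i, 0 ≤ δ i := fun i => (abs_nonneg _).trans (hoff i (i + 1) (by omega))
  obtain ⟨j, hj, hjmax⟩ := exists_max_image (range m) (fun i => |a i|) ⟨0, mem_range.2 hm⟩
  set U := ∑ i ∈ range m, a i • x i
  have hsplit : ψ j U = a j * ψ j (x j) + ∑ i ∈ (range m).erase j, a i * ψ j (x i) := by
    simp [U, map_sum, ← add_sum_erase _ _ hj]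
  have herr : |∑ i ∈ (range m).erase j, a i * ψ j (x i)| ≤ |a j| * (c / 2) :=
    calc |∑ i ∈ (range m).erase j, a i * ψ j (x i)|
        ≤ ∑ i ∈ (range m).erase j, |a j| * δ i := by
          refine (abs_sum_le_sum_abs _ _).trans (sum_le_sum fun i hi => ?_)
          rw [abs_mul]
          exact mul_le_mul (hjmax i (mem_of_mem_erase hi)) (hoff i j (ne_of_mem_erase hi))
            (abs_nonneg _) (abs_nonneg _)
      _ ≤ |a j| * ∑ i ∈ range m, δ i := by
          rw [← mul_sum]
          exact mul_le_mul_of_nonneg_left (sum_le_sum_of_subset_of_nonneg (erase_subset _ _)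
            fun i _ _ => hδ0 i) (abs_nonneg _)
      _ ≤ |a j| * (c / 2) := mul_le_mul_of_nonneg_left (hδ m) (abs_nonneg _)
  have hmain : |a j| * c ≤ |a j * ψ j (x j)| := by
    rw [abs_mul]
    exact mul_le_mul_of_nonneg_left ((hdiag j).trans (le_abs_self _)) (abs_nonneg _)
  have hψU : |a j| * (c / 2) ≤ C * ‖U‖ := by
    have := abs_sub_abs_le_abs_sub (a j * ψ j (x j)) (-∑ i ∈ (range m).erase j, a i * ψ j (x i))
    rw [sub_neg_eq_add, ← hsplit, abs_neg] at this
    calc |a j| * (c / 2) ≤ |ψ j U| := by linarith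
      _ ≤ ‖ψ j‖ * ‖U‖ := by simpa [Real.norm_eq_abs] using (ψ j).le_opNorm U
      _ ≤ C * ‖U‖ := mul_le_mul_of_nonneg_right (hψ j) (norm_nonneg U)
  calc c / (2 * C) * ⨆ i : Fin m, |a i| ≤ c / (2 * C) * |a j| :=
        mul_le_mul_of_nonneg_left (Real.iSup_le (fun i => hjmax i (mem_range.2 i.2))
          (abs_nonneg _)) (by positivity)
    _ ≤ ‖U‖ := by
        rw [div_mul_eq_mul_div, div_le_iff₀ (by positivity)]
        linarith

theorem exists_strictMono_lower_c0_estimate {x : ℕ → X}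
    (hx : ∀ φ : StrongDual ℝ X, Tendsto (fun N => φ (x N)) atTop (𝓝 0)) {ε : ℝ} (hε : 0 < ε)
    (hxε : ∀ N, ε ≤ ‖x N‖) :
    ∃ n : ℕ → ℕ, StrictMono n ∧ ∀ (m : ℕ) (a : ℕ → ℝ),
      ε / 8 * ⨆ i : Fin m, |a i| ≤ ‖∑ i ∈ range m, a i • x (n i)‖ := by
  choose φ hφ1 hφx using fun N => exists_dual_vector ℝ (x N) (by linarith [hxε N])
  let 𝒰 : Ultrafilter ℕ := .of atTop
  have h𝒰 : (𝒰 : Filter ℕ) ≤ atTop := Ultrafilter.of_le atTop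
  obtain ⟨Φ, hΦ, hΦlim⟩ := StrongDual.exists_tendsto_ultrafilter 𝒰 φ fun N => (hφ1 N).le
  set δ : ℕ → ℝ := fun i => ε / 8 * (1 / 2) ^ i
  have hsmall : ∀ {f : ℕ → ℝ} {l : Filter ℕ} {r : ℝ}, Tendsto f l (𝓝 0) → 0 < r →
      ∀ᶠ b in l, |f b| ≤ r := fun hf hr => by
    simpa [Real.dist_eq] using hf.eventually (closedBall_mem_nhds 0 hr)
  -- `φ b - Φ` is small on earlier terms (by the choice of `Φ`), and `φ a - Φ` is small on later
  -- ones (weak nullity); so `φ (n j) - Φ` is almost biorthogonal to `x ∘ n`.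
  obtain ⟨n, hn, hnΦ, hnoff⟩ := Filter.exists_strictMono_forall_of_eventually h𝒰
    (P := fun _ b => |Φ (x b)| ≤ ε / 2)
    (R := fun i j a b => |(φ b - Φ) (x a)| ≤ δ i ∧ |(φ a - Φ) (x b)| ≤ δ j)
    (fun _ => (hsmall (hx Φ) (by positivity)).filter_mono h𝒰)
    (fun i j a => (hsmall (f := fun b => (φ b - Φ) (x a))
      (by simpa using (hΦlim (x a)).sub_const (Φ (x a))) (by positivity)).and
      ((hsmall (hx (φ a - Φ)) (by positivity)).filter_mono h𝒰))
  refine ⟨n, hn, fun m a => ?_⟩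
  have hψ : ∀ j, ‖φ (n j) - Φ‖ ≤ 2 := fun j =>
    (norm_sub_le _ _).trans (by linarith [hφ1 (n j)])
  have hdiag : ∀ j, ε / 2 ≤ (φ (n j) - Φ) (x (n j)) := fun j => by
    simp only [FunLike.coe_sub, Pi.sub_apply, hφx, RCLike.ofReal_real_eq_id, id_eq]
    linarith [hxε (n j), (abs_le.mp (hnΦ j)).2]
  have hoff : ∀ i j, i ≠ j → |(φ (n j) - Φ) (x (n i))| ≤ δ i := fun i j hij =>
    hij.lt_or_gt.elim (fun h => (hnoff i j h).1) fun h => (hnoff j i h).2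
  have hδ : ∀ m, ∑ i ∈ range m, δ i ≤ ε / 2 / 2 := fun m => by
    rw [← mul_sum]
    nlinarith [sum_geometric_two_le m]
  convert le_norm_sum_smul_of_almost_biorthogonal two_pos hψ hdiag hoff hδ m a using 2
  ring

theorem WUC.exists_strictMono_isEquivC0Basis {x : ℕ → X} (hx : WUC x) {ε : ℝ} (hε : 0 < ε)
    (hxε : ∀ N, ε ≤ ‖x N‖) : ∃ n : ℕ → ℕ, StrictMono n ∧ IsEquivC0Basis fun j => x (n j) := by
  obtain ⟨n, hn, hlower⟩ := exists_strictMono_lower_c0_estimate hx.tendsto_apply_zero hε hxε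
  obtain ⟨M, -, hupper⟩ := (hx.comp_injective hn.injective).exists_norm_sum_smul_le
  refine ⟨n, hn, ε / 8, max M (ε / 8), by positivity, le_max_right _ _, fun m a =>
    ⟨hlower m a, (hupper m a).trans ?_⟩⟩
  exact mul_le_mul_of_nonneg_right (le_max_left _ _) (Real.iSup_nonneg fun _ => abs_nonneg _)

end LowerEstimate

theorem orlicz_pettis_of_norms_not_tendsto_zero_general {X : Type u} {Y : Type v}
    [NormedAddCommGroup X] [NormedSpace ℝ X] [CompleteSpace X]
    [NormedAddCommGroup Y] [NormedSpace ℝ Y]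
    (k : ℕ) (hk : 1 ≤ k) (A : ContinuousMultilinearMap ℝ (fun _ : Fin k => X) Y)
    (P : X → Y) (hP : P = fun x => A fun _ => x)
    (hE : ∀ x : ℕ → X, IsEquivC0Basis x →
      ¬ Tendsto (fun n => ‖P (x n)‖) atTop (𝓝 0)) :
    ∀ (Z : Type w) [NormedAddCommGroup Z] [NormedSpace ℝ Z] [CompleteSpace Z]
      (T : Z →L[ℝ] X), UCPoly (fun z => P (T z)) → UCOp ⇑T := by
  subst hP
  intro Z _ _ _ T hPT z hz
  by_contra hTz
  obtain ⟨ε, hε, B, hB, hBε⟩ := exists_pairwise_disjoint_norm_sum_ge hTz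
  have hv : WUC fun j => ∑ i ∈ B j, z i := hz.sum_of_pairwise_disjoint hB
  obtain ⟨n, hn, hc0⟩ := (hv.map T).exists_strictMono_isEquivC0Basis hε fun j => by
    simpa [map_sum] using hBε j
  refine hE _ hc0 (tendsto_zero_iff_norm_tendsto_zero.mp ?_)
  exact UCPoly.tendsto_apply_diag_zero (by omega)
    (A.toMultilinearMap.compLinearMap fun _ => T.toLinearMap) hPT
    (hv.comp_injective hn.injective)

/-- Condition (E) implies that `P` is an Orlicz–Pettis polynomial. -/
theorem orlicz_pettis_of_norms_not_tendsto_zero {X : Type u} {Y : Type v}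
    [NormedAddCommGroup X] [NormedSpace ℝ X] [CompleteSpace X]
    [NormedAddCommGroup Y] [NormedSpace ℝ Y] [CompleteSpace Y]
    (k : ℕ) (hk : 1 ≤ k) (A : ContinuousMultilinearMap ℝ (fun _ : Fin k => X) Y)
    (P : X → Y) (hP : P = fun x => A fun _ => x)
    (hE : ∀ x : ℕ → X, IsEquivC0Basis x →
      ¬ Tendsto (fun n => ‖P (x n)‖) atTop (𝓝 0)) :
    ∀ (Z : Type w) [NormedAddCommGroup Z] [NormedSpace ℝ Z] [CompleteSpace Z]
      (T : Z →L[ℝ] X), UCPoly (fun z => P (T z)) → UCOp ⇑T :=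
  orlicz_pettis_of_norms_not_tendsto_zero_general k hk A P hP hE
end
end

section
/- There exists a continuous 2-homogeneous polynomial P : c₀ → c₀ such that P(eₙ) = 0 for every n ∈ ℕ (so the sequence ‖P(eₙ)‖ converges to 0 although (eₙ) is equivalent to the c₀-basis), and yet P is an Orlicz–Pettis polynomial: for every real Banach space Z and every bounded linear operator T : Z → c₀, if the polynomial P∘T is unconditionally converging then T is an unconditionally converging operator. -/
/-!
Take `P x = (xᵢ xⱼ)_{i < j}`, which vanishes on the unit vectors. If `T` is not unconditionally
converging, some w.u.C. series `∑ xₙ` has `∑ T xₙ` not Cauchy in `c₀`. A gliding hump yields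
disjoint finite blocks `tⱼ`, so that `x'ⱼ = ∑_{n ∈ tⱼ} xₙ` is again w.u.C., and coordinates
`k₀ < k₁ < ⋯` with `|T (∑_{j < m} x'ⱼ) (kₐ)| ≥ δ / 2` whenever `a < m`. Then `P` at these partial
sums has modulus at least `δ² / 4` at the coordinates `(k₀, k_b)`, which escape to infinity, so
these values cannot converge in `c₀`.
-/

open Filter Topology Metric

noncomputable section

open Finset Function

lemma c0_abs_apply_le_norm (f : c0) (k : ℕ) : |f k| ≤ ‖f‖ :=
  f.toBCF.norm_coe_le_norm k

lemma c0_norm_le {f : c0} {C : ℝ} (hC : 0 ≤ C) (h : ∀ k, |f k| ≤ C) : ‖f‖ ≤ C := by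
  rw [← ZeroAtInftyContinuousMap.norm_toBCF_eq_norm]
  exact (BoundedContinuousFunction.norm_le hC).mpr h

lemma c0_exists_lt_abs_apply {f : c0} {r : ℝ} (hr : r < ‖f‖) : ∃ k, r < |f k| := by
  by_contra! h
  exact hr.not_ge (c0_norm_le ((abs_nonneg _).trans (h 0)) h)

lemma c0_tendsto_apply (f : c0) : Tendsto (fun k => f k) atTop (𝓝 0) := by
  simpa [cocompact_eq_cofinite, Nat.cofinite_eq_atTop] using f.zero_at_infty'

def c0Eval (k : ℕ) : c0 →L[ℝ] ℝ :=
  LinearMap.mkContinuous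
    { toFun := fun f => f k
      map_add' := fun _ _ => rfl
      map_smul' := fun _ _ => rfl }
    1 fun f => by simpa using c0_abs_apply_le_norm f k

@[simp] lemma c0Eval_apply (k : ℕ) (f : c0) : c0Eval k f = f k := rfl

lemma c0_sum_apply {ι : Type*} (s : Finset ι) (f : ι → c0) (k : ℕ) :
    (∑ i ∈ s, f i) k = ∑ i ∈ s, f i k :=
  map_sum (c0Eval k) f s

def lowIdx (m : ℕ) : ℕ := (Nat.unpair m).1

def highIdx (m : ℕ) : ℕ := (Nat.unpair m).1 + (Nat.unpair m).2 + 1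

def pairIdx (i j : ℕ) : ℕ := Nat.pair i (j - i - 1)

lemma lowIdx_lt_highIdx (m : ℕ) : lowIdx m < highIdx m := by
  simp [lowIdx, highIdx]

lemma lowIdx_pairIdx (i j : ℕ) : lowIdx (pairIdx i j) = i := by
  simp [lowIdx, pairIdx]

lemma highIdx_pairIdx {i j : ℕ} (h : i < j) : highIdx (pairIdx i j) = j := by
  simp [highIdx, pairIdx]
  omega

lemma tendsto_pairIdx_atTop (i : ℕ) : Tendsto (pairIdx i) atTop atTop :=
  tendsto_atTop_atTop.2 fun N => ⟨N + i + 1, fun j hj =>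
    (Nat.right_le_pair _ _).trans' (by omega)⟩

lemma tendsto_highIdx_atTop : Tendsto highIdx atTop atTop := by
  refine tendsto_atTop_atTop.2 fun N => ⟨N ^ 2, fun m hm => ?_⟩
  have hm_lt : m < highIdx m ^ 2 :=
    calc m = Nat.pair (Nat.unpair m).1 (Nat.unpair m).2 := (Nat.pair_unpair m).symm
      _ < (max (Nat.unpair m).1 (Nat.unpair m).2 + 1) ^ 2 := Nat.pair_lt_max_add_one_sq _ _
      _ ≤ highIdx m ^ 2 := by unfold highIdx; gcongr; omega
  by_contra! h
  have : highIdx m ^ 2 < N ^ 2 := by gcongr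
  omega

/-- The sequence `(x i * y j)_{i < j}`, the pair `i < j` being stored at index `pairIdx i j`. -/
def offDiagMul (x y : c0) : c0 where
  toFun m := x (lowIdx m) * y (highIdx m)
  continuous_toFun := continuous_of_discreteTopology
  zero_at_infty' := by
    rw [cocompact_eq_cofinite, Nat.cofinite_eq_atTop]
    exact isBoundedUnder_le_mul_tendsto_zero
      (isBoundedUnder_of ⟨‖x‖, fun m => c0_abs_apply_le_norm x _⟩)
      ((c0_tendsto_apply y).comp tendsto_highIdx_atTop)

@[simp] lemma offDiagMul_apply (x y : c0) (m : ℕ) :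
    offDiagMul x y m = x (lowIdx m) * y (highIdx m) := rfl

lemma norm_offDiagMul_le (x y : c0) : ‖offDiagMul x y‖ ≤ ‖x‖ * ‖y‖ :=
  c0_norm_le (by positivity) fun m => by
    rw [offDiagMul_apply, abs_mul]
    exact mul_le_mul (c0_abs_apply_le_norm x _) (c0_abs_apply_le_norm y _) (abs_nonneg _)
      (norm_nonneg _)

lemma offDiagMul_e_self (n : ℕ) : offDiagMul (e n) (e n) = 0 := by
  ext m
  have hne := (lowIdx_lt_highIdx m).ne
  by_cases h : lowIdx m = n
  · simp [e, h, show highIdx m ≠ n by omega]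
  · simp [e, h]

def offDiagMulMultilinear : ContinuousMultilinearMap ℝ (fun _ : Fin 2 => c0) c0 :=
  MultilinearMap.mkContinuous
    { toFun := fun v => offDiagMul (v 0) (v 1)
      map_update_add' := by
        intro _ v i a b
        fin_cases i <;> ext k <;> simp [add_mul, mul_add]
      map_update_smul' := by
        intro _ v i c a
        fin_cases i <;> ext k <;> simp [mul_assoc, mul_left_comm] }
    1 fun v => by simpa [Fin.prod_univ_two] using norm_offDiagMul_le (v 0) (v 1)

lemma not_tendsto_offDiagMul_of_le_abs {u : ℕ → c0} {k : ℕ → ℕ} (hk : StrictMono k) {r : ℝ}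
    (hr : 0 < r) (hu : ∀ a m, a < m → r ≤ |u m (k a)|) (L : c0) :
    ¬ Tendsto (fun m => offDiagMul (u m) (u m)) atTop (𝓝 L) := by
  intro hL
  have hcoord : ∀ b, 0 < b → r ^ 2 ≤ |L (pairIdx (k 0) (k b))| := by
    intro b hb
    have hlim := (((c0Eval (pairIdx (k 0) (k b))).continuous.tendsto L).comp hL).abs
    simp only [comp_def, c0Eval_apply, offDiagMul_apply, lowIdx_pairIdx,
      highIdx_pairIdx (hk hb)] at hlim
    refine ge_of_tendsto hlim (eventually_atTop.2 ⟨b + 1, fun m hm => ?_⟩)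
    rw [abs_mul, sq]
    exact mul_le_mul (hu 0 m (by omega)) (hu b m (by omega)) hr.le (abs_nonneg _)
  have hsmall := ((c0_tendsto_apply L).comp
    ((tendsto_pairIdx_atTop (k 0)).comp hk.tendsto_atTop)).abs
  rw [abs_zero] at hsmall
  obtain ⟨b, hlt, hb⟩ :=
    ((hsmall.eventually (gt_mem_nhds (by positivity : 0 < r ^ 2))).and
      (eventually_gt_atTop 0)).exists
  exact hlt.not_ge (hcoord b hb)

lemma summable_sum_of_pairwise_disjoint {g : ℕ → ℝ} (hg : ∀ n, 0 ≤ g n) (hs : Summable g)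
    {t : ℕ → Finset ℕ} (ht : Pairwise (Disjoint on t)) :
    Summable fun j => ∑ n ∈ t j, g n :=
  summable_of_sum_range_le (fun _ => sum_nonneg fun n _ => hg n) fun J => by
    rw [← sum_biUnion (ht.set_pairwise _)]
    exact hs.sum_le_tsum _ fun n _ => hg n

lemma abs_sum_sum_le_sum_biUnion {f : ℕ → ℝ} {t : ℕ → Finset ℕ} {I : Finset ℕ}
    (ht : (I : Set ℕ).PairwiseDisjoint t) :
    |∑ j ∈ I, ∑ n ∈ t j, f n| ≤ ∑ n ∈ I.biUnion t, |f n| := by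
  rw [sum_biUnion ht]
  exact (abs_sum_le_sum_abs _ _).trans (sum_le_sum fun j _ => abs_sum_le_sum_abs _ _)

lemma WUC.sum_of_pairwise_disjoint_s7 {X : Type*} [NormedAddCommGroup X] [NormedSpace ℝ X]
    {x : ℕ → X} (hx : WUC x) {t : ℕ → Finset ℕ} (ht : Pairwise (Disjoint on t)) :
    WUC fun j => ∑ n ∈ t j, x n := fun φ =>
  (summable_sum_of_pairwise_disjoint (fun _ => abs_nonneg _) (hx φ) ht).of_nonneg_of_le
    (fun _ => abs_nonneg _) fun j => by
      rw [map_sum]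
      exact abs_sum_le_sum_abs _ _

lemma exists_lt_abs_sum_apply_of_not_summable {ι : Type*} {y : ι → c0} (hy : ¬ Summable y) :
    ∃ δ > 0, ∀ s : Finset ι, ∃ t, Disjoint t s ∧ ∃ k, δ < |∑ i ∈ t, y i k| := by
  rw [summable_iff_vanishing_norm] at hy
  push Not at hy
  obtain ⟨ε, hε, hy⟩ := hy
  refine ⟨ε / 2, by positivity, fun s => ?_⟩
  obtain ⟨t, hts, hle⟩ := hy s
  obtain ⟨k, hk⟩ := c0_exists_lt_abs_apply (show ε / 2 < ‖∑ i ∈ t, y i‖ by linarith)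
  exact ⟨t, hts, k, by rwa [c0_sum_apply] at hk⟩

section

variable {y : ℕ → c0} {δ ε : ℝ}

lemma exists_finset_sum_abs_apply_lt (hcol : ∀ k, Summable fun n => |y n k|) (hε : 0 < ε)
    (K : ℕ) : ∃ s : Finset ℕ, ∀ t, Disjoint t s → ∀ k ≤ K, ∑ n ∈ t, |y n k| < ε := by
  choose s hs using fun k => (summable_iff_vanishing_norm.1 (hcol k)) ε hε
  refine ⟨(range (K + 1)).biUnion s, fun t ht k hk => ?_⟩
  have := hs k t ((disjoint_biUnion_right _ _ _).1 ht k (mem_range.2 (by omega)))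
  rwa [Real.norm_of_nonneg (sum_nonneg fun n _ => abs_nonneg _)] at this

lemma exists_hump (hcol : ∀ k, Summable fun n => |y n k|) (hδ0 : 0 < δ)
    (hδ : ∀ s : Finset ℕ, ∃ t, Disjoint t s ∧ ∃ k, δ < |∑ n ∈ t, y n k|) (hε : 0 < ε)
    (F : Finset ℕ) (K : ℕ) :
    ∃ (t : Finset ℕ) (k : ℕ) (F' : Finset ℕ), Disjoint t F ∧ K < k ∧
      ∑ n ∈ F, |y n k| ≤ ε ∧ δ < |∑ n ∈ t, y n k| ∧ F ∪ t ⊆ F' ∧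
      ∀ t', Disjoint t' F' → ∑ n ∈ t', |y n k| ≤ ε := by
  have hhead : Tendsto (fun k => ∑ n ∈ F, |y n k|) atTop (𝓝 0) := by
    simpa using tendsto_finsetSum F fun n _ => (c0_tendsto_apply (y n)).abs
  obtain ⟨K', hK'⟩ := eventually_atTop.1
    ((hhead.eventually (ge_mem_nhds hε)).and (eventually_gt_atTop K))
  obtain ⟨s, hs⟩ := exists_finset_sum_abs_apply_lt hcol hδ0 K'
  obtain ⟨t, hts, k, hk⟩ := hδ (F ∪ s)
  rw [disjoint_union_right] at hts
  have hK'k : K' ≤ k := by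
    by_contra! hlt
    exact lt_asymm hk ((abs_sum_le_sum_abs _ _).trans_lt (hs t hts.2 k hlt.le))
  obtain ⟨s', hs'⟩ := exists_finset_sum_abs_apply_lt hcol hε k
  refine ⟨t, k, F ∪ t ∪ s', hts.1, (hK' k hK'k).2, (hK' k hK'k).1, hk, subset_union_left,
    fun t' ht' => (hs' t' (disjoint_union_right.1 ht').2 k le_rfl).le⟩

/-- At `coord j` the earlier blocks lie inside `used j` and the later ones outside
`used (j + 1)`, so together they carry mass at most `2ε` there, against the hump of `block j`. -/
structure GlidingHump (y : ℕ → c0) (δ ε : ℝ) where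
  block : ℕ → Finset ℕ
  coord : ℕ → ℕ
  used : ℕ → Finset ℕ
  used_mono : Monotone used
  coord_strictMono : StrictMono coord
  disjoint_used : ∀ j, Disjoint (block j) (used j)
  block_subset : ∀ j, block j ⊆ used (j + 1)
  sum_used_le : ∀ j, ∑ n ∈ used j, |y n (coord j)| ≤ ε
  lt_abs_sum_block : ∀ j, δ < |∑ n ∈ block j, y n (coord j)|
  sum_le_of_disjoint : ∀ j t, Disjoint t (used (j + 1)) → ∑ n ∈ t, |y n (coord j)| ≤ ε

lemma exists_glidingHump (hcol : ∀ k, Summable fun n => |y n k|) (hδ0 : 0 < δ)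
    (hδ : ∀ s : Finset ℕ, ∃ t, Disjoint t s ∧ ∃ k, δ < |∑ n ∈ t, y n k|) (hε : 0 < ε) :
    Nonempty (GlidingHump y δ ε) := by
  choose t k F' hdisj hK hhead hhump hsub htail using exists_hump hcol hδ0 hδ hε
  let state : ℕ → Finset ℕ × ℕ := fun j =>
    Nat.rec (∅, 0) (fun _ p => (F' p.1 p.2, k p.1 p.2)) j
  exact ⟨{
    block := fun j => t (state j).1 (state j).2
    coord := fun j => k (state j).1 (state j).2
    used := fun j => (state j).1
    used_mono := monotone_nat_of_le_succ fun j => subset_union_left.trans (hsub _ _)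
    coord_strictMono := strictMono_nat_of_lt_succ fun j => hK _ _
    disjoint_used := fun j => hdisj _ _
    block_subset := fun j => subset_union_right.trans (hsub _ _)
    sum_used_le := fun j => hhead _ _
    lt_abs_sum_block := fun j => hhump _ _
    sum_le_of_disjoint := fun j => htail _ _ }⟩

namespace GlidingHump

variable (H : GlidingHump y δ ε)

lemma pairwise_disjoint_block : Pairwise (Disjoint on H.block) := by
  refine (pairwise_disjoint_on H.block).2 fun i j hij => ?_
  exact (H.disjoint_used j).symm.mono_left ((H.block_subset i).trans (H.used_mono hij))

lemma sub_two_mul_le_abs_sum {a m : ℕ} (ham : a < m) :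
    δ - 2 * ε ≤ |∑ j ∈ range m, ∑ n ∈ H.block j, y n (H.coord a)| := by
  set f : ℕ → ℝ := fun n => y n (H.coord a)
  have hdisj : ∀ I : Finset ℕ, (I : Set ℕ).PairwiseDisjoint H.block :=
    fun I => H.pairwise_disjoint_block.set_pairwise _
  have hbefore : |∑ j ∈ range a, ∑ n ∈ H.block j, f n| ≤ ε := by
    refine (abs_sum_sum_le_sum_biUnion (hdisj _)).trans
      ((sum_le_sum_of_subset_of_nonneg ?_ fun n _ _ => abs_nonneg _).trans (H.sum_used_le a))
    exact biUnion_subset.2 fun j hj =>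
      (H.block_subset j).trans (H.used_mono (by simp only [mem_range] at hj; omega))
  have hafter : |∑ j ∈ Ico (a + 1) m, ∑ n ∈ H.block j, f n| ≤ ε := by
    refine (abs_sum_sum_le_sum_biUnion (hdisj _)).trans (H.sum_le_of_disjoint a _ ?_)
    exact (disjoint_biUnion_left _ _ _).2 fun j hj =>
      (H.disjoint_used j).mono_right (H.used_mono (by simp only [mem_Ico] at hj; omega))
  have hsplit : ∑ j ∈ range m, ∑ n ∈ H.block j, f n = ∑ j ∈ range a, ∑ n ∈ H.block j, f n +
      ∑ n ∈ H.block a, f n + ∑ j ∈ Ico (a + 1) m, ∑ n ∈ H.block j, f n := by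
    rw [← sum_range_succ, sum_range_add_sum_Ico _ ham]
  have hhump := H.lt_abs_sum_block a
  rw [hsplit]
  generalize ∑ j ∈ range a, ∑ n ∈ H.block j, f n = X at hbefore
  generalize ∑ n ∈ H.block a, f n = Y at hhump
  generalize ∑ j ∈ Ico (a + 1) m, ∑ n ∈ H.block j, f n = Z at hafter
  have := abs_add_three (X + Y + Z) (-X) (-Z)
  rw [abs_neg, abs_neg, show X + Y + Z + -X + -Z = Y by ring] at this
  linarith

end GlidingHump

end

/-- There is a continuous 2-homogeneous polynomial `P : c₀ → c₀` vanishing on the unit vector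
basis which is nevertheless an Orlicz–Pettis polynomial. -/
theorem exists_orlicz_pettis_vanishing_on_basis :
    ∃ A : ContinuousMultilinearMap ℝ (fun _ : Fin 2 => c0) c0,
      (∀ n : ℕ, (A fun _ => e n) = 0) ∧
      ∀ (Z : Type u) [NormedAddCommGroup Z] [NormedSpace ℝ Z] [CompleteSpace Z]
        (T : Z →L[ℝ] c0), UCPoly (fun z => A fun _ => T z) → UCOp ⇑T := by
  refine ⟨offDiagMulMultilinear, offDiagMul_e_self, fun Z _ _ _ T hP x hx => ?_⟩
  by_contra hT
  have hcol : ∀ k, Summable fun n => |T (x n) k| := fun k => hx ((c0Eval k).comp T)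
  obtain ⟨δ, hδ0, hδ⟩ := exists_lt_abs_sum_apply_of_not_summable hT
  obtain ⟨H⟩ := exists_glidingHump hcol hδ0 hδ (ε := δ / 4) (by positivity)
  obtain ⟨L, hL⟩ := hP _ (hx.sum_of_pairwise_disjoint_s7 H.pairwise_disjoint_block)
  refine not_tendsto_offDiagMul_of_le_abs H.coord_strictMono (r := δ / 2) (by positivity)
    (fun a m ham => ?_) L hL
  have := H.sub_two_mul_le_abs_sum ham
  simp only [map_sum, c0_sum_apply]
  linarith
end
end
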